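/- Let K > 0, A ≠ 0, B ∈ ℝ, m ∈ {0, 4}, and let L, M, P, Q be real constants with L·Q − M·P ≠ 0. Let I be a nonempty open interval on which Ax + B > 0 and P + Q·(Ax+B) ≠ 0. Then the pair f(x) = K·(Ax+B)^m, g(x) = (L + M·(Ax+B)) / (P + Q·(Ax+B)) satisfies g' ≠ 0 on I and satisfies both Eq. (I) and Eq. (II) at every point of I. -/

import Mathlib

/-! With `u = A x + B`, `g` is a Möbius transformation of `x`, so its Schwarzian derivative
`g'''/g' - (3/2)(g''/g')²` vanishes, and dividing Eq. (I) by `g'` leaves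
`(3/10)(f'/f)² - (2/5) f''/f = 0`. For `f = K u^n` the ratios `f⁽ʲ⁾/f` are
`n(n-1)⋯(n-j+1) (A/u)^j`, so this condition and Eq. (II) divided by `f` become polynomial
identities in `n`: the first has the factor `n(4-n)`, the second `n(n-4)(2n-3)(2n-5)`. -/

/-- Eq. (I): `g''' = (3/10)·g'·(f')²/f² − (2/5)·g'·f''/f + (3/2)·(g'')²/g'`. -/
def SatEqI (f g : ℝ → ℝ) (x : ℝ) : Prop :=
  (deriv^[3] g x) =
    (3/10) * deriv g x * (deriv f x)^2 / (f x)^2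
      - (2/5) * deriv g x * (deriv^[2] f x) / f x
      + (3/2) * (deriv^[2] g x)^2 / deriv g x

/-- Eq. (II): `f'''' = f'·f'''/f + (11/10)·(f'')²/f − (12/5)·(f')²·f''/f² + (9/10)·(f')⁴/f³`. -/
def SatEqII (f : ℝ → ℝ) (x : ℝ) : Prop :=
  (deriv^[4] f x) =
    deriv f x * (deriv^[3] f x) / f x
      + (11/10) * (deriv^[2] f x)^2 / f x
      - (12/5) * (deriv f x)^2 * (deriv^[2] f x) / (f x)^2
      + (9/10) * (deriv f x)^4 / (f x)^3

open Set Finset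

theorem Set.EqOn.iterate_deriv {f g : ℝ → ℝ} {U : Set ℝ} (h : EqOn f g U) (hU : IsOpen U) :
    ∀ j : ℕ, EqOn (_root_.deriv^[j] f) (_root_.deriv^[j] g) U
  | 0 => h
  | j + 1 => by
    simpa only [Function.iterate_succ_apply'] using (h.iterate_deriv hU j).deriv hU

theorem isOpen_setOf_affine_ne_zero (c d : ℝ) : IsOpen {x : ℝ | c * x + d ≠ 0} :=
  isOpen_ne_fun (by fun_prop) continuous_const

theorem hasDerivAt_affine (c d x : ℝ) : HasDerivAt (fun x => c * x + d) c x := by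
  simpa using ((hasDerivAt_id x).const_mul c).add_const d

theorem hasDerivAt_const_mul_affine_zpow (k c d : ℝ) (n : ℤ) {x : ℝ} (hx : c * x + d ≠ 0) :
    HasDerivAt (fun x => k * (c * x + d) ^ n) (k * n * c * (c * x + d) ^ (n - 1)) x := by
  have := ((hasDerivAt_zpow n _ (Or.inl hx)).comp x (hasDerivAt_affine c d x)).const_mul k
  exact this.congr_deriv (by ring)

theorem iterate_deriv_const_mul_affine_zpow (k c d : ℝ) (n : ℤ) (j : ℕ) :
    EqOn (deriv^[j] fun x => k * (c * x + d) ^ n)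
      (fun x => k * (∏ i ∈ range j, ((n : ℝ) - i)) * c ^ j * (c * x + d) ^ (n - j))
      {x | c * x + d ≠ 0} := by
  induction j with
  | zero => intro x _; simp
  | succ j ih =>
    intro x hx
    rw [Function.iterate_succ_apply', ih.deriv (isOpen_setOf_affine_ne_zero c d) hx,
      (hasDerivAt_const_mul_affine_zpow _ c d (n - j) hx).deriv, prod_range_succ, pow_succ,
      Nat.cast_succ, ← sub_sub]
    push_cast
    ring

theorem iterate_deriv_const_mul_affine_zpow_div_self {k c d x : ℝ} (hk : k ≠ 0)
    (hx : c * x + d ≠ 0) (n : ℤ) (j : ℕ) :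
    deriv^[j] (fun x => k * (c * x + d) ^ n) x / (k * (c * x + d) ^ n) =
      (∏ i ∈ range j, ((n : ℝ) - i)) * (c / (c * x + d)) ^ j := by
  rw [iterate_deriv_const_mul_affine_zpow k c d n j hx]
  dsimp only
  rw [zpow_sub₀ hx, zpow_natCast, div_pow]
  field_simp

section Mobius

variable {a b c d : ℝ}

theorem hasDerivAt_mobius {x : ℝ} (hx : c * x + d ≠ 0) :
    HasDerivAt (fun x => (a * x + b) / (c * x + d)) ((a * d - b * c) * (c * x + d) ^ (-2 : ℤ)) x :=
  ((hasDerivAt_affine a b x).div (hasDerivAt_affine c d x) hx).congr_deriv (by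
    rw [zpow_neg, zpow_two]
    field_simp
    ring)

theorem iterate_succ_deriv_mobius (j : ℕ) :
    EqOn (deriv^[j + 1] fun x => (a * x + b) / (c * x + d))
      (fun x => (a * d - b * c) * (∏ i ∈ range j, ((-2 : ℤ) - (i : ℝ))) * c ^ j *
        (c * x + d) ^ (-2 - j : ℤ))
      {x | c * x + d ≠ 0} := by
  intro x hx
  have hderiv : EqOn (deriv fun x => (a * x + b) / (c * x + d))
      (fun x => (a * d - b * c) * (c * x + d) ^ (-2 : ℤ)) {x | c * x + d ≠ 0} :=
    fun x hx => (hasDerivAt_mobius hx).deriv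
  rw [Function.iterate_succ_apply, hderiv.iterate_deriv (isOpen_setOf_affine_ne_zero c d) j hx,
    iterate_deriv_const_mul_affine_zpow _ c d _ j hx]

end Mobius

noncomputable def schwarzian (g : ℝ → ℝ) (x : ℝ) : ℝ :=
  deriv^[3] g x / deriv g x - 3 / 2 * (deriv^[2] g x / deriv g x) ^ 2

theorem schwarzian_mobius {a b c d x : ℝ} (hx : c * x + d ≠ 0) :
    schwarzian (fun x => (a * x + b) / (c * x + d)) x = 0 := by
  have h := fun j => iterate_succ_deriv_mobius (a := a) (b := b) j hx
  rw [schwarzian, h 2, h 1, show deriv = deriv^[0 + 1] from rfl, h 0]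
  simp only [prod_range_succ, prod_range_zero]
  norm_num
  rcases eq_or_ne (a * d - b * c) 0 with had | had
  · simp [had]
  · field_simp
    ring

theorem deriv_mobius_ne_zero {a b c d x : ℝ} (had : a * d - b * c ≠ 0) (hx : c * x + d ≠ 0) :
    deriv (fun x => (a * x + b) / (c * x + d)) x ≠ 0 := by
  rw [(hasDerivAt_mobius hx).deriv]
  exact mul_ne_zero had (zpow_ne_zero _ hx)

theorem satEqI_iff_schwarzian {f g : ℝ → ℝ} {x : ℝ} (hg : deriv g x ≠ 0) :
    SatEqI f g x ↔
      schwarzian g x = 3 / 10 * (deriv f x / f x) ^ 2 - 2 / 5 * (deriv^[2] f x / f x) := by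
  have h : deriv^[3] g x - (3 / 10 * deriv g x * deriv f x ^ 2 / f x ^ 2
      - 2 / 5 * deriv g x * deriv^[2] f x / f x + 3 / 2 * deriv^[2] g x ^ 2 / deriv g x) =
      deriv g x * (schwarzian g x
        - (3 / 10 * (deriv f x / f x) ^ 2 - 2 / 5 * (deriv^[2] f x / f x))) := by
    unfold schwarzian
    field_simp
    ring
  rw [SatEqI, ← sub_eq_zero, h, mul_eq_zero, sub_eq_zero, or_iff_right hg]

theorem satEqII_iff {f : ℝ → ℝ} {x : ℝ} (hf : f x ≠ 0) :
    SatEqII f x ↔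
      deriv^[4] f x / f x = deriv f x / f x * (deriv^[3] f x / f x)
        + 11 / 10 * (deriv^[2] f x / f x) ^ 2
        - 12 / 5 * (deriv f x / f x) ^ 2 * (deriv^[2] f x / f x)
        + 9 / 10 * (deriv f x / f x) ^ 4 := by
  have h : deriv^[4] f x - (deriv f x * deriv^[3] f x / f x + 11 / 10 * deriv^[2] f x ^ 2 / f x
      - 12 / 5 * deriv f x ^ 2 * deriv^[2] f x / f x ^ 2 + 9 / 10 * deriv f x ^ 4 / f x ^ 3) =
      f x * (deriv^[4] f x / f x - (deriv f x / f x * (deriv^[3] f x / f x)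
        + 11 / 10 * (deriv^[2] f x / f x) ^ 2
        - 12 / 5 * (deriv f x / f x) ^ 2 * (deriv^[2] f x / f x)
        + 9 / 10 * (deriv f x / f x) ^ 4)) := by
    field_simp
  rw [SatEqII, ← sub_eq_zero, h, mul_eq_zero, sub_eq_zero, or_iff_right hf]

section AffinePower

variable {k c d x : ℝ} {n : ℤ}

theorem satEqI_const_mul_affine_zpow_iff {g : ℝ → ℝ} (hk : k ≠ 0) (hx : c * x + d ≠ 0)
    (hn : n = 0 ∨ n = 4) (hg : deriv g x ≠ 0) :
    SatEqI (fun x => k * (c * x + d) ^ n) g x ↔ schwarzian g x = 0 := by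
  have h := iterate_deriv_const_mul_affine_zpow_div_self hk hx n
  have h1 : deriv (fun x => k * (c * x + d) ^ n) x / _ = _ := h 1
  have hrhs : 3 / 10 * (deriv (fun x => k * (c * x + d) ^ n) x / (k * (c * x + d) ^ n)) ^ 2
      - 2 / 5 * (deriv^[2] (fun x => k * (c * x + d) ^ n) x / (k * (c * x + d) ^ n)) = 0 := by
    rw [h1, h 2]
    rcases hn with rfl | rfl <;> norm_num [prod_range_succ]
    ring
  rw [satEqI_iff_schwarzian hg, hrhs]

theorem satEqII_const_mul_affine_zpow (hk : k ≠ 0) (hx : c * x + d ≠ 0) (hn : n = 0 ∨ n = 4) :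
    SatEqII (fun x => k * (c * x + d) ^ n) x := by
  have h := iterate_deriv_const_mul_affine_zpow_div_self hk hx n
  have h1 : deriv (fun x => k * (c * x + d) ^ n) x / _ = _ := h 1
  rw [satEqII_iff (f := fun x => k * (c * x + d) ^ n) (mul_ne_zero hk (zpow_ne_zero n hx)), h1,
    h 2, h 3, h 4]
  rcases hn with rfl | rfl <;> norm_num [prod_range_succ]
  ring

end AffinePower

theorem statement13_general
    (K A B m : ℝ) (hK : 0 < K) (hA : A ≠ 0) (hm : m ∈ ({0, 4} : Set ℝ))
    (L M P Q : ℝ) (hLQMP : L * Q - M * P ≠ 0)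
    (I : Set ℝ)
    (hIpos : ∀ x ∈ I, 0 < A * x + B)
    (hden : ∀ x ∈ I, P + Q * (A * x + B) ≠ 0)
    (f g : ℝ → ℝ)
    (hf : f = fun x => K * (A * x + B) ^ m)
    (hg : g = fun x => (L + M * (A * x + B)) / (P + Q * (A * x + B))) :
    ∀ x ∈ I, deriv g x ≠ 0 ∧ SatEqI f g x ∧ SatEqII f x := by
  obtain ⟨n, hn, rfl⟩ : ∃ n : ℤ, (n = 0 ∨ n = 4) ∧ (n : ℝ) = m := by
    rcases hm with rfl | rfl
    exacts [⟨0, by simp⟩, ⟨4, by simp⟩]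
  have hg_mobius : g = fun x => (M * A * x + (L + M * B)) / (Q * A * x + (P + Q * B)) := by
    rw [hg]; ext x; ring_nf
  simp only [Real.rpow_intCast] at hf
  subst hf hg_mobius
  intro x hx
  have hdet : M * A * (P + Q * B) - (L + M * B) * (Q * A) ≠ 0 := by
    have : M * A * (P + Q * B) - (L + M * B) * (Q * A) = -A * (L * Q - M * P) := by ring
    rw [this]; exact mul_ne_zero (neg_ne_zero.2 hA) hLQMP
  have hpole : Q * A * x + (P + Q * B) ≠ 0 := by convert hden x hx using 1; ring
  have hg1 := deriv_mobius_ne_zero hdet hpole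
  exact ⟨hg1, (satEqI_const_mul_affine_zpow_iff hK.ne' (hIpos x hx).ne' hn hg1).2
    (schwarzian_mobius hpole), satEqII_const_mul_affine_zpow hK.ne' (hIpos x hx).ne' hn⟩

/-- for `m ∈ {0, 4}`, the pair `f = K(Ax+B)^m`,
`g = (L + M(Ax+B))/(P + Q(Ax+B))` (with `LQ − MP ≠ 0`) satisfies `g' ≠ 0` and
Eqs. (I) and (II) on `I`. -/
theorem statement13
    (K A B m : ℝ) (hK : 0 < K) (hA : A ≠ 0) (hm : m ∈ ({0, 4} : Set ℝ))
    (L M P Q : ℝ) (hLQMP : L * Q - M * P ≠ 0)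
    (I : Set ℝ) (hIopen : IsOpen I) (hIinterval : I.OrdConnected) (hIne : I.Nonempty)
    (hIpos : ∀ x ∈ I, 0 < A * x + B)
    (hden : ∀ x ∈ I, P + Q * (A * x + B) ≠ 0)
    (f g : ℝ → ℝ)
    (hf : f = fun x => K * (A * x + B) ^ m)
    (hg : g = fun x => (L + M * (A * x + B)) / (P + Q * (A * x + B))) :
    ∀ x ∈ I, deriv g x ≠ 0 ∧ SatEqI f g x ∧ SatEqII f x :=
  statement13_general K A B m hK hA hm L M P Q hLQMP I hIpos hden f g hf hg
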